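/- For every nonnegative integer n, the operator T_0 = Σ_{i=1}^N ∂_i² + 2a Σ_{i=1}^N (z_i − z_{i+1})^{-1}(∂_i − ∂_{i+1}) − 2a Σ_{i=1}^N (z_i − z_{i+1})^{-2}(1 − K_{i,i+1}) leaves invariant the space 𝒮_0^n consisting of those polynomials in z_1,…,z_N of total degree at most n that can be written as a polynomial in σ_1, σ_2, σ_3 which is of degree at most 1 in σ_3 (i.e. of the form p(σ_1,σ_2) + σ_3 q(σ_1,σ_2)); that is, for f ∈ 𝒮_0^n the rational function T_0 f is again a polynomial lying in 𝒮_0^n. -/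

import Mathlib

noncomputable section

open MvPolynomial

/-- Polynomials in `N` variables over `ℂ`. -/
abbrev MvP (N : ℕ) : Type := MvPolynomial (Fin N) ℂ

/-- The canonical embedding of polynomials into the field of rational functions. -/
noncomputable def phi (N : ℕ) : MvP N →+* FractionRing (MvP N) :=
  algebraMap (MvP N) (FractionRing (MvP N))

/-- The power sum `σ_k = ∑ i, z_i ^ k`. -/
def sig (N k : ℕ) : MvP N := ∑ i : Fin N, X i ^ k

/-- The operator
`T_0 = ∑ i ∂_i² + 2a ∑ i (z_i - z_{i+1})⁻¹ (∂_i - ∂_{i+1})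
  - 2a ∑ i (z_i - z_{i+1})⁻² (1 - K_{i,i+1})`
(indices cyclic, `K_{i,i+1}` exchanging the variables `z_i` and `z_{i+1}`),
computed in the field of rational functions. -/
noncomputable def T0op (N : ℕ) [NeZero N] (a : ℝ) (f : MvP N) : FractionRing (MvP N) :=
  (∑ i : Fin N, phi N (pderiv i (pderiv i f)))
  + phi N (C ((2 * a : ℝ) : ℂ)) *
      ∑ i : Fin N, (phi N (X i - X (i + 1)))⁻¹ * phi N (pderiv i f - pderiv (i + 1) f)
  - phi N (C ((2 * a : ℝ) : ℂ)) *
      ∑ i : Fin N, ((phi N (X i - X (i + 1)))⁻¹) ^ 2 *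
        phi N (f - rename (Equiv.swap i (i + 1)) f)

/-- Membership in the space `𝒮_0^n`: polynomials of total degree at most `n` expressible as
a polynomial in `σ_1, σ_2, σ_3` of degree at most `1` in `σ_3`. -/
def S0mem (N n : ℕ) (f : MvP N) : Prop :=
  f.totalDegree ≤ n ∧
    ∃ F : MvPolynomial (Fin 3) ℂ, F.degreeOf 2 ≤ 1 ∧
      f = aeval ![sig N 1, sig N 2, sig N 3] F

/-! ### Auxiliary lemmas -/

section Aux

variable {σ : Type*} {R : Type*} [CommRing R]

lemma degreeOf_monomial_le' (k : σ) (t : σ →₀ ℕ) (a : R) :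
    degreeOf k (monomial t a) ≤ t k := by
  classical
  refine degreeOf_le_iff.mpr fun m hm => ?_
  rw [support_monomial] at hm
  split_ifs at hm with h
  · simp at hm
  · rw [Finset.mem_singleton] at hm; subst hm; exact le_rfl

lemma pderiv_eq_sum_monomial [DecidableEq σ] (j : σ) (p : MvPolynomial σ R) :
    pderiv j p = ∑ s ∈ p.support, monomial (s - Finsupp.single j 1) (coeff s p * s j) := by
  conv_lhs => rw [← support_sum_monomial_coeff p]
  rw [map_sum]
  exact Finset.sum_congr rfl fun s _ => by rw [pderiv_monomial]

lemma degreeOf_pderiv_le' (k j : σ) (p : MvPolynomial σ R) :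
    degreeOf k (pderiv j p) ≤ degreeOf k p := by
  classical
  rw [pderiv_eq_sum_monomial]
  refine (degreeOf_sum_le _ _ _).trans (Finset.sup_le fun s hs => ?_)
  refine (degreeOf_monomial_le' _ _ _).trans ?_
  rw [Finsupp.tsub_apply]
  exact (Nat.sub_le _ _).trans (degreeOf_le_iff.mp le_rfl s hs)

lemma degreeOf_pderiv_self_le' (i : σ) (p : MvPolynomial σ R) :
    degreeOf i (pderiv i p) ≤ degreeOf i p - 1 := by
  classical
  rw [pderiv_eq_sum_monomial]
  refine (degreeOf_sum_le _ _ _).trans (Finset.sup_le fun s hs => ?_)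
  by_cases h0 : s i = 0
  · rw [h0]
    push_cast [Nat.cast_zero, mul_zero]
    simp
  · refine (degreeOf_monomial_le' _ _ _).trans ?_
    rw [Finsupp.tsub_apply, Finsupp.single_apply, if_pos rfl]
    exact Nat.sub_le_sub_right (degreeOf_le_iff.mp le_rfl s hs) 1

lemma pderiv_pderiv_eq_zero' (i : σ) (p : MvPolynomial σ R) (h : degreeOf i p ≤ 1) :
    pderiv i (pderiv i p) = 0 := by
  classical
  have h2 : degreeOf i (pderiv i p) = 0 :=
    Nat.le_zero.mp ((degreeOf_pderiv_self_le' i p).trans (by omega))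
  refine pderiv_eq_zero_of_notMem_vars fun hmem => ?_
  obtain ⟨d, hd, hid⟩ := (mem_vars _).mp hmem
  exact (Finsupp.mem_support_iff.mp hid)
    (Nat.le_zero.mp ((degreeOf_le_iff.mp h2.le) d hd))

lemma finsupp_sum_le {u v : σ →₀ ℕ} (h : u ≤ v) :
    u.sum (fun _ e => e) ≤ v.sum (fun _ e => e) := by
  classical
  have hc := add_tsub_cancel_of_le h
  calc u.sum (fun _ e => e) ≤ u.sum (fun _ e => e) + (v - u).sum (fun _ e => e) :=
        Nat.le_add_right _ _
    _ = (u + (v - u)).sum (fun _ e => e) :=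
        (Finsupp.sum_add_index' (fun _ => rfl) (fun _ _ _ => rfl)).symm
    _ = v.sum (fun _ e => e) := by rw [hc]

lemma totalDegree_pderiv_le' (j : σ) (p : MvPolynomial σ R) :
    (pderiv j p).totalDegree ≤ p.totalDegree := by
  classical
  rw [pderiv_eq_sum_monomial]
  refine (totalDegree_finset_sum _ _).trans (Finset.sup_le fun s hs => ?_)
  refine (totalDegree_monomial_le _ _).trans ?_
  exact (finsupp_sum_le tsub_le_self).trans (le_totalDegree hs)

lemma totalDegree_lin_mul {i j : σ} (hij : i ≠ j) {h : MvPolynomial σ R} (hh : h ≠ 0) :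
    h.totalDegree + 1 ≤ ((X i - X j) * h).totalDegree := by
  classical
  set D := h.totalDegree with hD
  have hsupp : h.support.Nonempty := support_nonempty.mpr hh
  set S := h.support.filter (fun s => s.sum (fun _ e => e) = D) with hS
  have hSne : S.Nonempty := by
    obtain ⟨s, hs, hds⟩ := Finset.exists_mem_eq_sup h.support hsupp
      (fun s : σ →₀ ℕ => s.sum fun _ e => e)
    exact ⟨s, Finset.mem_filter.mpr ⟨hs, hds.symm⟩⟩
  obtain ⟨m, hmS, hmax⟩ := S.exists_max_image (fun s => s i) hSne
  obtain ⟨hmsupp, hmsum⟩ := Finset.mem_filter.mp hmS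
  set s0 : σ →₀ ℕ := Finsupp.single i 1 + m with hs0
  have hsum0 : s0.sum (fun _ e => e) = D + 1 := by
    rw [Finsupp.sum_add_index' (fun _ => rfl) (fun _ _ _ => rfl),
      Finsupp.sum_single_index rfl, hmsum, add_comm]
  have key : coeff s0 ((X i - X j) * h) = coeff m h := by
    rw [sub_mul, coeff_sub, coeff_X_mul, coeff_X_mul']
    have hz : (if j ∈ s0.support then coeff (s0 - Finsupp.single j 1) h else 0) = 0 := by
      split_ifs with hjs
      · by_contra hne
        have htsupp : s0 - Finsupp.single j 1 ∈ h.support := Finsupp.mem_support_iff.mpr hne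
        have hle : Finsupp.single j 1 ≤ s0 := by
          rw [Finsupp.single_le_iff]
          exact Nat.one_le_iff_ne_zero.mpr (Finsupp.mem_support_iff.mp hjs)
        have hsumt : (s0 - Finsupp.single j 1).sum (fun _ e => e) = D := by
          have hc := add_tsub_cancel_of_le hle
          have h2 : (Finsupp.single j 1 + (s0 - Finsupp.single j 1)).sum (fun _ e => e)
              = D + 1 := by rw [hc, hsum0]
          rw [Finsupp.sum_add_index' (fun _ => rfl) (fun _ _ _ => rfl),
            Finsupp.sum_single_index rfl] at h2
          omega
        have htS : s0 - Finsupp.single j 1 ∈ S :=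
          Finset.mem_filter.mpr ⟨htsupp, hsumt⟩
        have h1 : s0 i = m i + 1 := by
          rw [hs0, Finsupp.add_apply, Finsupp.single_apply, if_pos rfl, add_comm]
        have h2 : (Finsupp.single j 1) i = 0 :=
          Finsupp.single_eq_of_ne' (Ne.symm hij)
        have hti : ((s0 - Finsupp.single j 1 : σ →₀ ℕ)) i = m i + 1 := by
          rw [Finsupp.tsub_apply, h1, h2]; omega
        have := hmax _ htS
        omega
      · rfl
    rw [hz, sub_zero]
  have hne2 : coeff s0 ((X i - X j) * h) ≠ 0 := by
    rw [key]; exact Finsupp.mem_support_iff.mp hmsupp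
  have hmem : s0 ∈ ((X i - X j) * h).support := Finsupp.mem_support_iff.mpr hne2
  have hle2 := le_totalDegree hmem
  omega

end Aux

section Chain

lemma pderiv_ofNat' {N : ℕ} (i : Fin N) (n : ℕ) [n.AtLeastTwo] :
    pderiv i (OfNat.ofNat n : MvP N) = 0 := by
  rw [← map_ofNat (C : ℂ →+* MvP N) n]; exact pderiv_C

lemma chainRule {N : ℕ} (v : Fin 3 → MvP N) (i : Fin N) (F : MvPolynomial (Fin 3) ℂ) :
    pderiv i (aeval v F) = ∑ j : Fin 3, aeval v (pderiv j F) * pderiv i (v j) := by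
  induction F using MvPolynomial.induction_on with
  | C c => simp only [aeval_C, MvPolynomial.algebraMap_eq, pderiv_C, map_zero, zero_mul,
      Finset.sum_const_zero]
  | add p q hp hq => simp only [map_add, hp, hq, add_mul, Finset.sum_add_distrib]
  | mul_X p j hp =>
    rw [map_mul, aeval_X, pderiv_mul, hp]
    have hsum : ∀ k : Fin 3, aeval v (pderiv k (p * X j)) * pderiv i (v k)
        = aeval v (pderiv k p) * pderiv i (v k) * v j
          + (aeval v p * aeval v (pderiv k (X j : MvPolynomial (Fin 3) ℂ))) * pderiv i (v k) := by
      intro k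
      rw [pderiv_mul, map_add, map_mul, map_mul, aeval_X, add_mul]
      ring
    rw [Finset.sum_congr rfl fun k _ => hsum k, Finset.sum_add_distrib, ← Finset.sum_mul]
    congr 1
    rw [Finset.sum_eq_single j]
    · rw [pderiv_X_self, map_one, mul_one]
    · intro k _ hkj
      rw [pderiv_X_of_ne (Ne.symm hkj), map_zero, mul_zero, zero_mul]
    · intro hj; exact absurd (Finset.mem_univ j) hj

lemma pderiv_sig {N : ℕ} (i : Fin N) (k : ℕ) :
    pderiv i (sig N k) = (k : MvP N) * X i ^ (k - 1) := by
  unfold sig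
  rw [map_sum, Finset.sum_eq_single i]
  · rw [pderiv_pow, pderiv_X_self, mul_one]
  · intro m _ hmi
    rw [pderiv_pow, pderiv_X_of_ne hmi, mul_zero]
  · intro hi; exact absurd (Finset.mem_univ i) hi

/-- The substitution vector. -/
def vv (N : ℕ) : Fin 3 → MvP N := ![sig N 1, sig N 2, sig N 3]

lemma pdf {N : ℕ} (F : MvPolynomial (Fin 3) ℂ) (i : Fin N) :
    pderiv i (aeval (vv N) F)
      = aeval (vv N) (pderiv 0 F) + 2 * aeval (vv N) (pderiv 1 F) * X i
        + 3 * aeval (vv N) (pderiv 2 F) * X i ^ 2 := by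
  rw [chainRule]
  rw [Fin.sum_univ_three]
  rw [show vv N 0 = sig N 1 from rfl, show vv N 1 = sig N 2 from rfl,
    show vv N 2 = sig N 3 from rfl, pderiv_sig, pderiv_sig, pderiv_sig]
  norm_num
  ring

lemma sig_rename {N k : ℕ} (e : Equiv.Perm (Fin N)) : rename (⇑e) (sig N k) = sig N k := by
  calc rename ⇑e (sig N k) = ∑ i : Fin N, (X (e i) : MvP N) ^ k := by
        unfold sig
        rw [map_sum]
        exact Finset.sum_congr rfl fun i _ => by rw [map_pow, rename_X]
    _ = sig N k := Fintype.sum_equiv e (fun i => X (e i) ^ k) (fun i => X i ^ k) (fun _ => rfl)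

lemma sum_X_pow_succ {N : ℕ} [NeZero N] (k : ℕ) :
    ∑ i : Fin N, (X (i + 1) : MvP N) ^ k = sig N k :=
  Fintype.sum_equiv (Equiv.addRight (1 : Fin N)) _ _ (fun _ => rfl)

end Chain

set_option maxHeartbeats 2000000 in
set_option synthInstance.maxHeartbeats 500000 in
theorem stmt_3 (N : ℕ) [NeZero N] (hN : 3 ≤ N) (a : ℝ) (n : ℕ) (f : MvP N)
    (hf : S0mem N n f) :
    ∃ g : MvP N, S0mem N n g ∧ phi N g = T0op N a f := by
  obtain ⟨hdeg, F, hF2, hfeq⟩ := hf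
  subst hfeq
  rw [show (![sig N 1, sig N 2, sig N 3] : Fin 3 → MvP N) = vv N from rfl]
  -- index arithmetic
  have hii : ∀ i : Fin N, i ≠ i + 1 := by
    intro i hc
    have hval := congrArg Fin.val hc
    rw [Fin.val_add, Fin.val_one'] at hval
    have hi := i.isLt
    have h1N : 1 % N = 1 := Nat.mod_eq_of_lt (by omega)
    rw [h1N] at hval
    rcases Nat.lt_or_ge (i.val + 1) N with hlt | hge
    · rw [Nat.mod_eq_of_lt hlt] at hval; omega
    · have hEq : i.val + 1 = N := by omega
      rw [hEq, Nat.mod_self] at hval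
      omega
  -- injectivity of phi
  have hphi_inj : Function.Injective (phi N) := IsFractionRing.injective (MvP N) _
  have hphi_ne : ∀ p : MvP N, p ≠ 0 → phi N p ≠ 0 := fun p hp =>
    (map_ne_zero_iff (phi N) hphi_inj).mpr hp
  have hd0 : ∀ i : Fin N, (X i - X (i + 1) : MvP N) ≠ 0 := fun i =>
    sub_ne_zero.mpr (fun hc => (hii i) (X_injective hc))
  -- second F-derivative in direction 2 vanishes
  have h22F : pderiv 2 (pderiv 2 F) = 0 := pderiv_pderiv_eq_zero' 2 F hF2
  have h22v : aeval (vv N) (pderiv 2 (pderiv 2 F)) = 0 := by rw [h22F, map_zero]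
  -- the quotient polynomials
  set h : Fin N → MvP N := fun i =>
    2 * aeval (vv N) (pderiv 1 F) + 3 * aeval (vv N) (pderiv 2 F) * (X i + X (i + 1)) with hh
  have hdiff : ∀ i : Fin N,
      pderiv i (aeval (vv N) F) - pderiv (i + 1) (aeval (vv N) F) = (X i - X (i + 1)) * h i := by
    intro i
    rw [pdf F i, pdf F (i + 1), hh]
    ring
  -- second derivatives
  have hsnd : ∀ i : Fin N, pderiv i (pderiv i (aeval (vv N) F)) =
      (aeval (vv N) (pderiv 0 (pderiv 0 F)) + 2 * aeval (vv N) (pderiv 1 F))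
      + (2 * aeval (vv N) (pderiv 1 (pderiv 0 F)) + 2 * aeval (vv N) (pderiv 0 (pderiv 1 F))
          + 6 * aeval (vv N) (pderiv 2 F)) * X i
      + (3 * aeval (vv N) (pderiv 2 (pderiv 0 F)) + 4 * aeval (vv N) (pderiv 1 (pderiv 1 F))
          + 3 * aeval (vv N) (pderiv 0 (pderiv 2 F))) * X i ^ 2
      + (6 * aeval (vv N) (pderiv 2 (pderiv 1 F))
          + 6 * aeval (vv N) (pderiv 1 (pderiv 2 F))) * X i ^ 3 := by
    intro i
    have e0 := pdf (pderiv 0 F) i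
    have e1 := pdf (pderiv 1 F) i
    have e2 := pdf (pderiv 2 F) i
    have p2 : pderiv i (2 : MvP N) = 0 := pderiv_ofNat' i 2
    have p3 : pderiv i (3 : MvP N) = 0 := pderiv_ofNat' i 3
    rw [pdf F i]
    simp only [map_add, pderiv_mul, p2, p3, pderiv_X_self, pderiv_pow, e0, e1, e2,
      zero_mul, mul_zero, add_zero, zero_add, mul_one]
    push_cast
    linear_combination (9 * X i ^ 4 : MvP N) * h22v
  -- sums
  have hs1 : (∑ i : Fin N, (X i : MvP N)) = sig N 1 := by
    unfold sig; exact Finset.sum_congr rfl fun i _ => (pow_one _).symm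
  have hNC : ((N : ℕ) : MvP N) = C ((N : ℕ) : ℂ) := (map_natCast (C : ℂ →+* MvP N) N).symm
  -- the two summed identities
  have hsum2 : ∑ i : Fin N, h i
      = C ((N : ℕ) : ℂ) * (2 * aeval (vv N) (pderiv 1 F))
        + 6 * aeval (vv N) (pderiv 2 F) * sig N 1 := by
    rw [hh]
    rw [Finset.sum_add_distrib, Finset.sum_const, Finset.card_univ, Fintype.card_fin,
      ← Finset.mul_sum]
    have hx : ∑ i : Fin N, ((X i : MvP N) + X (i + 1)) = sig N 1 + sig N 1 := by
      rw [Finset.sum_add_distrib, hs1]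
      congr 1
      have := sum_X_pow_succ (N := N) 1
      simpa [pow_one] using this
    rw [hx, nsmul_eq_mul, hNC]
    ring
  have hsum1 : ∑ i : Fin N, pderiv i (pderiv i (aeval (vv N) F)) =
      C ((N : ℕ) : ℂ) * (aeval (vv N) (pderiv 0 (pderiv 0 F)) + 2 * aeval (vv N) (pderiv 1 F))
      + (2 * aeval (vv N) (pderiv 1 (pderiv 0 F)) + 2 * aeval (vv N) (pderiv 0 (pderiv 1 F))
          + 6 * aeval (vv N) (pderiv 2 F)) * sig N 1
      + (3 * aeval (vv N) (pderiv 2 (pderiv 0 F)) + 4 * aeval (vv N) (pderiv 1 (pderiv 1 F))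
          + 3 * aeval (vv N) (pderiv 0 (pderiv 2 F))) * sig N 2
      + (6 * aeval (vv N) (pderiv 2 (pderiv 1 F))
          + 6 * aeval (vv N) (pderiv 1 (pderiv 2 F))) * sig N 3 := by
    rw [Finset.sum_congr rfl fun i _ => hsnd i]
    rw [Finset.sum_add_distrib, Finset.sum_add_distrib, Finset.sum_add_distrib,
      Finset.sum_const, Finset.card_univ, Fintype.card_fin,
      ← Finset.mul_sum, ← Finset.mul_sum, ← Finset.mul_sum, hs1,
      show (∑ i : Fin N, (X i : MvP N) ^ 2) = sig N 2 from rfl,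
      show (∑ i : Fin N, (X i : MvP N) ^ 3) = sig N 3 from rfl,
      nsmul_eq_mul, hNC]
  -- the candidate polynomial
  set g : MvP N := (∑ i : Fin N, pderiv i (pderiv i (aeval (vv N) F)))
      + C ((2 * a : ℝ) : ℂ) * ∑ i : Fin N, h i with hg
  -- the representing polynomial in three variables
  set G : MvPolynomial (Fin 3) ℂ :=
      C ((N : ℕ) : ℂ) * (pderiv 0 (pderiv 0 F) + C 2 * pderiv 1 F)
      + (C 2 * pderiv 1 (pderiv 0 F) + C 2 * pderiv 0 (pderiv 1 F) + C 6 * pderiv 2 F) * X 0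
      + (C 3 * pderiv 2 (pderiv 0 F) + C 4 * pderiv 1 (pderiv 1 F)
          + C 3 * pderiv 0 (pderiv 2 F)) * X 1
      + (C 6 * pderiv 2 (pderiv 1 F) + C 6 * pderiv 1 (pderiv 2 F)) * X 2
      + C ((2 * a : ℝ) : ℂ) * (C ((N : ℕ) : ℂ) * (C 2 * pderiv 1 F)
          + C 6 * pderiv 2 F * X 0) with hGdef
  have hGeval : aeval (vv N) G = g := by
    rw [hg, hsum1, hsum2, hGdef]
    simp only [map_add, map_mul, aeval_C, aeval_X, MvPolynomial.algebraMap_eq, map_ofNat,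
      show vv N 0 = sig N 1 from rfl, show vv N 1 = sig N 2 from rfl,
      show vv N 2 = sig N 3 from rfl]
  refine ⟨g, ⟨?_, G, ?_, hGeval.symm⟩, ?_⟩
  · -- total degree bound
    rw [hg]
    refine (totalDegree_add _ _).trans (max_le ?_ ?_)
    · refine (totalDegree_finset_sum _ _).trans (Finset.sup_le fun i _ => ?_)
      exact (totalDegree_pderiv_le' _ _).trans ((totalDegree_pderiv_le' _ _).trans hdeg)
    · refine (totalDegree_mul _ _).trans ?_
      rw [totalDegree_C, zero_add]
      refine (totalDegree_finset_sum _ _).trans (Finset.sup_le fun i _ => ?_)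
      by_cases hzi : h i = 0
      · rw [hzi, totalDegree_zero]; exact Nat.zero_le _
      · have hlm := totalDegree_lin_mul (hii i) hzi
        rw [← hdiff i] at hlm
        have h2 : (pderiv i (aeval (vv N) F) - pderiv (i + 1) (aeval (vv N) F)).totalDegree
            ≤ n := (totalDegree_sub _ _).trans
          (max_le ((totalDegree_pderiv_le' _ _).trans hdeg)
            ((totalDegree_pderiv_le' _ _).trans hdeg))
        omega
  · -- degreeOf 2 G ≤ 1
    have hmax1 : ∀ p q : MvPolynomial (Fin 3) ℂ, degreeOf 2 p ≤ 1 → degreeOf 2 q ≤ 1 →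
        degreeOf 2 (p + q) ≤ 1 := fun p q hp hq => (degreeOf_add_le _ _ _).trans (max_le hp hq)
    have hmax0 : ∀ p q : MvPolynomial (Fin 3) ℂ, degreeOf 2 p ≤ 0 → degreeOf 2 q ≤ 0 →
        degreeOf 2 (p + q) ≤ 0 := fun p q hp hq => (degreeOf_add_le _ _ _).trans (max_le hp hq)
    have hC1 : ∀ (c : ℂ) (p : MvPolynomial (Fin 3) ℂ), degreeOf 2 p ≤ 1 →
        degreeOf 2 (C c * p) ≤ 1 := fun c p hp =>
      (degreeOf_mul_le _ _ _).trans (by simpa [degreeOf_C] using hp)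
    have hC0 : ∀ (c : ℂ) (p : MvPolynomial (Fin 3) ℂ), degreeOf 2 p ≤ 0 →
        degreeOf 2 (C c * p) ≤ 0 := fun c p hp =>
      (degreeOf_mul_le _ _ _).trans (by simpa [degreeOf_C] using hp)
    have k1 : degreeOf 2 (pderiv 1 F) ≤ 1 := (degreeOf_pderiv_le' _ _ _).trans hF2
    have k2 : degreeOf 2 (pderiv 2 F) ≤ 0 :=
      (degreeOf_pderiv_self_le' _ _).trans (Nat.sub_le_sub_right hF2 1)
    have k00 : degreeOf 2 (pderiv 0 (pderiv 0 F)) ≤ 1 :=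
      (degreeOf_pderiv_le' _ _ _).trans ((degreeOf_pderiv_le' _ _ _).trans hF2)
    have k10 : degreeOf 2 (pderiv 1 (pderiv 0 F)) ≤ 1 :=
      (degreeOf_pderiv_le' _ _ _).trans ((degreeOf_pderiv_le' _ _ _).trans hF2)
    have k01 : degreeOf 2 (pderiv 0 (pderiv 1 F)) ≤ 1 :=
      (degreeOf_pderiv_le' _ _ _).trans k1
    have k20 : degreeOf 2 (pderiv 2 (pderiv 0 F)) ≤ 1 :=
      ((degreeOf_pderiv_self_le' _ _).trans (Nat.sub_le _ _)).trans
        ((degreeOf_pderiv_le' _ _ _).trans hF2)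
    have k11 : degreeOf 2 (pderiv 1 (pderiv 1 F)) ≤ 1 :=
      (degreeOf_pderiv_le' _ _ _).trans k1
    have k02 : degreeOf 2 (pderiv 0 (pderiv 2 F)) ≤ 1 :=
      ((degreeOf_pderiv_le' _ _ _).trans k2).trans (Nat.zero_le 1)
    have k21 : degreeOf 2 (pderiv 2 (pderiv 1 F)) ≤ 0 :=
      (degreeOf_pderiv_self_le' _ _).trans (Nat.sub_le_sub_right k1 1)
    have k12 : degreeOf 2 (pderiv 1 (pderiv 2 F)) ≤ 0 :=
      (degreeOf_pderiv_le' _ _ _).trans k2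
    have hX0 : degreeOf 2 (X 0 : MvPolynomial (Fin 3) ℂ) = 0 := by
      rw [degreeOf_X]; decide
    have hX1 : degreeOf 2 (X 1 : MvPolynomial (Fin 3) ℂ) = 0 := by
      rw [degreeOf_X]; decide
    have hX2 : degreeOf 2 (X 2 : MvPolynomial (Fin 3) ℂ) = 1 := by
      rw [degreeOf_X]; decide
    have hCn : ∀ (c : ℂ), degreeOf 2 (C c : MvPolynomial (Fin 3) ℂ) = 0 := fun c =>
      degreeOf_C c 2
    rw [hGdef]
    refine hmax1 _ _ (hmax1 _ _ (hmax1 _ _ (hmax1 _ _ ?_ ?_) ?_) ?_) ?_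
    · exact hC1 _ _ (hmax1 _ _ k00 (hC1 _ _ k1))
    · refine (degreeOf_mul_le _ _ _).trans ?_
      rw [hX0]
      simpa using hmax1 _ _ (hmax1 _ _ (hC1 _ _ k10) (hC1 _ _ k01)) (hC1 _ _ (k2.trans (Nat.zero_le 1)))
    · refine (degreeOf_mul_le _ _ _).trans ?_
      rw [hX1]
      simpa using hmax1 _ _ (hmax1 _ _ (hC1 _ _ k20) (hC1 _ _ k11)) (hC1 _ _ k02)
    · refine (degreeOf_mul_le _ _ _).trans ?_
      rw [hX2]
      have h0 : degreeOf 2 (C 6 * pderiv 2 (pderiv 1 F) + C 6 * pderiv 1 (pderiv 2 F)) ≤ 0 :=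
        hmax0 _ _ (hC0 _ _ k21) (hC0 _ _ k12)
      omega
    · refine hC1 _ _ (hmax1 _ _ (hC1 _ _ (hC1 _ _ k1)) ?_)
      refine (degreeOf_mul_le _ _ _).trans ?_
      rw [hX0]
      have h0 : degreeOf 2 (C (6:ℂ) * pderiv 2 F) ≤ 0 := hC0 _ _ k2
      omega
  · -- the operator identity
    rw [T0op]
    have hsym : ∀ e : Equiv.Perm (Fin N), rename (⇑e) (aeval (vv N) F) = aeval (vv N) F := by
      intro e
      have hv : (fun i => rename (⇑e) (vv N i)) = vv N := by
        funext j
        fin_cases j <;> exact sig_rename e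
      have hcomp : (rename (⇑e) : MvP N →ₐ[ℂ] MvP N).comp (aeval (vv N)) = aeval (vv N) := by
        rw [comp_aeval, hv]
      exact AlgHom.congr_fun hcomp F
    have hren : ∀ i : Fin N,
        (aeval (vv N) F) - rename (⇑(Equiv.swap i (i + 1))) (aeval (vv N) F) = 0 := fun i => by
      rw [hsym _]; exact sub_self _
    simp only [hren, map_zero, mul_zero, Finset.sum_const_zero, sub_zero]
    have hmid : (∑ i : Fin N, (phi N (X i - X (i + 1)))⁻¹
        * phi N (pderiv i (aeval (vv N) F) - pderiv (i + 1) (aeval (vv N) F)))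
        = ∑ i : Fin N, phi N (h i) := by
      refine Finset.sum_congr rfl fun i _ => ?_
      rw [hdiff i, map_mul, inv_mul_cancel_left₀ (hphi_ne _ (hd0 i))]
    rw [hmid, hg, map_add, map_mul, map_sum (phi N) (fun i => pderiv i (pderiv i (aeval (vv N) F))) Finset.univ,
      map_sum (phi N) h Finset.univ]
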